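/- Let u : 𝕋² → ℝ² be a smooth divergence-free vector field, τ > 0, p ∈ [1, ∞), and suppose ξ, φ : 𝕋² → ℝ are smooth and satisfy φ = ξ − τ (u · ∇φ). Then ‖φ‖_{L^p(𝕋²)} ≤ ‖ξ‖_{L^p(𝕋²)}. -/

import Mathlib

open MeasureTheory

/-- Partial derivative in the first coordinate direction. -/
noncomputable def pd1 (f : ℝ × ℝ → ℝ) (x : ℝ × ℝ) : ℝ := fderiv ℝ f x (1, 0)

/-- Partial derivative in the second coordinate direction. -/
noncomputable def pd2 (f : ℝ × ℝ → ℝ) (x : ℝ × ℝ) : ℝ := fderiv ℝ f x (0, 1)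

/-- A function on ℝ² is ℤ²-periodic, i.e. a function on the torus 𝕋² = ℝ²/ℤ². -/
def Periodic2 {α : Type*} (f : ℝ × ℝ → α) : Prop :=
  ∀ x : ℝ × ℝ, f (x.1 + 1, x.2) = f x ∧ f (x.1, x.2 + 1) = f x

lemma cont_pd1 {f : ℝ × ℝ → ℝ} (hf : ContDiff ℝ (⊤ : ℕ∞) f) : Continuous (pd1 f) := by
  have h := hf.continuous_fderiv (by simp)
  exact (ContinuousLinearMap.apply ℝ ℝ (((1:ℝ),(0:ℝ)))).continuous.comp h

lemma cont_pd2 {f : ℝ × ℝ → ℝ} (hf : ContDiff ℝ (⊤ : ℕ∞) f) : Continuous (pd2 f) := by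
  have h := hf.continuous_fderiv (by simp)
  exact (ContinuousLinearMap.apply ℝ ℝ (((0:ℝ),(1:ℝ)))).continuous.comp h

lemma slice1 {f : ℝ × ℝ → ℝ} (hf : ContDiff ℝ (⊤ : ℕ∞) f) (x y : ℝ) :
    HasDerivAt (fun s => f (s, y)) (pd1 f (x, y)) x := by
  have hF : HasFDerivAt f (fderiv ℝ f (x, y)) (x, y) :=
    (hf.differentiable (by simp) (x, y)).hasFDerivAt
  have hι : HasDerivAt (fun s : ℝ => ((s, y) : ℝ × ℝ)) ((1:ℝ), (0:ℝ)) x :=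
    (hasDerivAt_id x).prodMk (hasDerivAt_const x y)
  exact hF.comp_hasDerivAt x hι

lemma slice2 {f : ℝ × ℝ → ℝ} (hf : ContDiff ℝ (⊤ : ℕ∞) f) (x y : ℝ) :
    HasDerivAt (fun s => f (x, s)) (pd2 f (x, y)) y := by
  have hF : HasFDerivAt f (fderiv ℝ f (x, y)) (x, y) :=
    (hf.differentiable (by simp) (x, y)).hasFDerivAt
  have hι : HasDerivAt (fun s : ℝ => ((x, s) : ℝ × ℝ)) ((0:ℝ), (1:ℝ)) y :=
    (hasDerivAt_const y x).prodMk (hasDerivAt_id y)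
  exact hF.comp_hasDerivAt y hι

lemma mySetIntegral_prod_symm {α β E : Type*} [MeasurableSpace α] [MeasurableSpace β]
    [NormedAddCommGroup E] [NormedSpace ℝ E] {μ : Measure α} {ν : Measure β}
    [SFinite μ] [SFinite ν]
    (f : α × β → E) {s : Set α} {t : Set β}
    (hf : IntegrableOn f (s ×ˢ t) (μ.prod ν)) :
    ∫ z in s ×ˢ t, f z ∂μ.prod ν = ∫ y in t, ∫ x in s, f (x, y) ∂μ ∂ν := by
  simp only [← Measure.prod_restrict s t, IntegrableOn] at hf ⊢
  exact integral_prod_symm f hf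

lemma int_pd1_zero {f : ℝ × ℝ → ℝ} (hf : ContDiff ℝ (⊤ : ℕ∞) f) (hper : Periodic2 f) :
    ∫ z in Set.Icc ((0:ℝ), (0:ℝ)) (1, 1), pd1 f z = 0 := by
  have hcont : Continuous (pd1 f) := cont_pd1 hf
  have hint : IntegrableOn (pd1 f) (Set.Icc ((0:ℝ), (0:ℝ)) (1, 1)) :=
    hcont.continuousOn.integrableOn_compact isCompact_Icc
  rw [Set.Icc_prod_eq] at hint ⊢
  rw [MeasureTheory.Measure.volume_eq_prod] at hint ⊢
  rw [mySetIntegral_prod_symm _ hint]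
  · have inner : ∀ y : ℝ, ∫ x in Set.Icc (0:ℝ) 1, pd1 f (x, y) = 0 := by
      intro y
      rw [MeasureTheory.integral_Icc_eq_integral_Ioc,
        ← intervalIntegral.integral_of_le (zero_le_one)]
      rw [intervalIntegral.integral_eq_sub_of_hasDerivAt
        (fun x _ => slice1 hf x y)
        ((hcont.comp (by continuity)).intervalIntegrable 0 1)]
      have := (hper (0, y)).1
      norm_num at this ⊢
      rw [this]; ring
    simp only [inner, integral_zero]

lemma int_pd2_zero {f : ℝ × ℝ → ℝ} (hf : ContDiff ℝ (⊤ : ℕ∞) f) (hper : Periodic2 f) :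
    ∫ z in Set.Icc ((0:ℝ), (0:ℝ)) (1, 1), pd2 f z = 0 := by
  have hcont : Continuous (pd2 f) := cont_pd2 hf
  have hint : IntegrableOn (pd2 f) (Set.Icc ((0:ℝ), (0:ℝ)) (1, 1)) :=
    hcont.continuousOn.integrableOn_compact isCompact_Icc
  rw [Set.Icc_prod_eq] at hint ⊢
  rw [MeasureTheory.Measure.volume_eq_prod] at hint ⊢
  rw [MeasureTheory.setIntegral_prod _ hint]
  have inner : ∀ x : ℝ, ∫ y in Set.Icc (0:ℝ) 1, pd2 f (x, y) = 0 := by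
    intro x
    rw [MeasureTheory.integral_Icc_eq_integral_Ioc,
      ← intervalIntegral.integral_of_le (zero_le_one)]
    rw [intervalIntegral.integral_eq_sub_of_hasDerivAt
      (fun y _ => slice2 hf x y)
      ((hcont.comp (by continuity)).intervalIntegrable 0 1)]
    have := (hper (x, 0)).2
    norm_num at this ⊢
    rw [this]; ring
  simp only [inner, integral_zero]

lemma pd1_mul {f g : ℝ × ℝ → ℝ} (hf : ContDiff ℝ (⊤ : ℕ∞) f) (hg : ContDiff ℝ (⊤ : ℕ∞) g) (x : ℝ × ℝ) :
    pd1 (fun y => f y * g y) x = f x * pd1 g x + g x * pd1 f x := by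
  have := fderiv_fun_mul (𝕜 := ℝ) (hf.differentiable (by simp) x) (hg.differentiable (by simp) x)
  simp only [pd1, this, ContinuousLinearMap.add_apply, ContinuousLinearMap.smul_apply,
    smul_eq_mul]

lemma pd2_mul {f g : ℝ × ℝ → ℝ} (hf : ContDiff ℝ (⊤ : ℕ∞) f) (hg : ContDiff ℝ (⊤ : ℕ∞) g) (x : ℝ × ℝ) :
    pd2 (fun y => f y * g y) x = f x * pd2 g x + g x * pd2 f x := by
  have := fderiv_fun_mul (𝕜 := ℝ) (hf.differentiable (by simp) x) (hg.differentiable (by simp) x)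
  simp only [pd2, this, ContinuousLinearMap.add_apply, ContinuousLinearMap.smul_apply,
    smul_eq_mul]

/-- Divergence theorem on the periodic square: for div-free `u` and periodic `g`,
`∫ u · ∇g = 0`. -/
lemma div_free_transport {u : ℝ × ℝ → ℝ × ℝ} {g : ℝ × ℝ → ℝ}
    (hu : ContDiff ℝ (⊤ : ℕ∞) u) (hup : Periodic2 u)
    (hdiv : ∀ x, pd1 (fun y => (u y).1) x + pd2 (fun y => (u y).2) x = 0)
    (hg : ContDiff ℝ (⊤ : ℕ∞) g) (hgp : Periodic2 g) :
    ∫ z in Set.Icc ((0:ℝ), (0:ℝ)) (1, 1),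
      ((u z).1 * pd1 g z + (u z).2 * pd2 g z) = 0 := by
  have hu1 : ContDiff ℝ (⊤ : ℕ∞) (fun y => (u y).1) := contDiff_fst.comp hu
  have hu2 : ContDiff ℝ (⊤ : ℕ∞) (fun y => (u y).2) := contDiff_snd.comp hu
  have key : ∀ z, (u z).1 * pd1 g z + (u z).2 * pd2 g z
      = pd1 (fun y => g y * (u y).1) z + pd2 (fun y => g y * (u y).2) z := by
    intro z
    rw [pd1_mul hg hu1 z, pd2_mul hg hu2 z]
    linear_combination (-(g z)) * hdiv z
  rw [MeasureTheory.setIntegral_congr_fun measurableSet_Icc (fun z _ => key z)]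
  have h1 : ContDiff ℝ (⊤ : ℕ∞) (fun y => g y * (u y).1) := hg.mul hu1
  have h2 : ContDiff ℝ (⊤ : ℕ∞) (fun y => g y * (u y).2) := hg.mul hu2
  rw [MeasureTheory.integral_add
    ((cont_pd1 h1).continuousOn.integrableOn_compact isCompact_Icc)
    ((cont_pd2 h2).continuousOn.integrableOn_compact isCompact_Icc)]
  rw [int_pd1_zero h1 (fun x => by
      have hg1 := (hgp x).1; have hg2 := (hgp x).2
      have hu1' := (hup x).1; have hu2' := (hup x).2
      constructor <;> simp [hg1, hg2, hu1', hu2']),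
    int_pd2_zero h2 (fun x => by
      have hg1 := (hgp x).1; have hg2 := (hgp x).2
      have hu1' := (hup x).1; have hu2' := (hup x).2
      constructor <;> simp [hg1, hg2, hu1', hu2'])]
  ring

section Feps
variable {p ε : ℝ}

/-- The smooth convex approximation of `|t|^p`. -/
noncomputable def Fe (p ε : ℝ) (t : ℝ) : ℝ := (t ^ 2 + ε ^ 2) ^ (p / 2 : ℝ)

/-- Its derivative. -/
noncomputable def Fe' (p ε : ℝ) (t : ℝ) : ℝ :=
  p * t * (t ^ 2 + ε ^ 2) ^ (p / 2 - 1 : ℝ)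

lemma Fe_base_pos (hε : ε ≠ 0) (t : ℝ) : 0 < t ^ 2 + ε ^ 2 := by positivity

lemma Fe_hasDerivAt (hε : ε ≠ 0) (t : ℝ) : HasDerivAt (Fe p ε) (Fe' p ε t) t := by
  have h1 : HasDerivAt (fun t : ℝ => t ^ 2 + ε ^ 2) (2 * t) t := by
    simpa using (hasDerivAt_pow 2 t).add_const (ε ^ 2)
  have h2 := h1.rpow_const (p := p / 2) (Or.inl (Fe_base_pos hε t).ne')
  convert h2 using 1
  · rfl
  unfold Fe'; ring

lemma Fe'_hasDerivAt (hε : ε ≠ 0) (t : ℝ) :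
    HasDerivAt (Fe' p ε)
      (p * (t ^ 2 + ε ^ 2) ^ (p / 2 - 1 : ℝ)
        + (p * t) * ((p / 2 - 1) * (t ^ 2 + ε ^ 2) ^ (p / 2 - 2 : ℝ) * (2 * t))) t := by
  have h1 : HasDerivAt (fun t : ℝ => t ^ 2 + ε ^ 2) (2 * t) t := by
    simpa using (hasDerivAt_pow 2 t).add_const (ε ^ 2)
  have h2 := h1.rpow_const (p := p / 2 - 1) (Or.inl (Fe_base_pos hε t).ne')
  have h3 : HasDerivAt (fun t : ℝ => p * t) p t := by
    simpa using (hasDerivAt_id t).const_mul p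
  have h4 := h3.mul h2
  convert h4 using 1
  · rfl
  · rfl
  · rfl
  ring_nf

lemma Fe'_deriv_nonneg (hε : ε ≠ 0) (hp : 1 ≤ p) (t : ℝ) :
    0 ≤ p * (t ^ 2 + ε ^ 2) ^ (p / 2 - 1 : ℝ)
        + (p * t) * ((p / 2 - 1) * (t ^ 2 + ε ^ 2) ^ (p / 2 - 2 : ℝ) * (2 * t)) := by
  have hA : 0 < t ^ 2 + ε ^ 2 := Fe_base_pos hε t
  have hsplit : (t ^ 2 + ε ^ 2) ^ (p / 2 - 1 : ℝ)
      = (t ^ 2 + ε ^ 2) ^ (p / 2 - 2 : ℝ) * (t ^ 2 + ε ^ 2) := by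
    rw [← Real.rpow_add_one hA.ne' (p / 2 - 2)]
    congr 1; ring
  rw [hsplit]
  have h2 : (0:ℝ) ≤ (t ^ 2 + ε ^ 2) ^ (p / 2 - 2 : ℝ) := Real.rpow_nonneg hA.le _
  have hexpand : p * ((t ^ 2 + ε ^ 2) ^ (p / 2 - 2 : ℝ) * (t ^ 2 + ε ^ 2))
      + (p * t) * ((p / 2 - 1) * (t ^ 2 + ε ^ 2) ^ (p / 2 - 2 : ℝ) * (2 * t))
      = p * (t ^ 2 + ε ^ 2) ^ (p / 2 - 2 : ℝ) * (ε ^ 2 + (p - 1) * t ^ 2) := by ring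
  rw [hexpand]
  have hp0 : (0:ℝ) < p := lt_of_lt_of_le one_pos hp
  have : (0:ℝ) ≤ ε ^ 2 + (p - 1) * t ^ 2 := by nlinarith [sq_nonneg t, sq_nonneg ε]
  positivity

lemma Fe_convex (hε : ε ≠ 0) (hp : 1 ≤ p) : ConvexOn ℝ Set.univ (Fe p ε) := by
  apply convexOn_of_hasDerivWithinAt2_nonneg (f' := Fe' p ε)
    (f'' := fun t => p * (t ^ 2 + ε ^ 2) ^ (p / 2 - 1 : ℝ)
        + (p * t) * ((p / 2 - 1) * (t ^ 2 + ε ^ 2) ^ (p / 2 - 2 : ℝ) * (2 * t)))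
    convex_univ
  · exact fun t _ => ((Fe_hasDerivAt hε t).continuousAt.continuousWithinAt)
  · intro t _
    exact (Fe_hasDerivAt hε t).hasDerivWithinAt
  · intro t _
    exact (Fe'_hasDerivAt hε t).hasDerivWithinAt
  · intro t _
    exact Fe'_deriv_nonneg hε hp t

/-- Supporting tangent line inequality for a convex function. -/
lemma tangent_le {f f' : ℝ → ℝ} (hc : ConvexOn ℝ Set.univ f)
    (hd : ∀ t, HasDerivAt f (f' t) t) (a b : ℝ) :
    f a + f' a * (b - a) ≤ f b := by
  rcases lt_trichotomy a b with h | h | h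
  · have := hc.le_slope_of_hasDerivAt (Set.mem_univ a) (Set.mem_univ b) h (hd a)
    rw [slope_def_field] at this
    have hba : 0 < b - a := by linarith
    rw [le_div_iff₀ hba] at this
    linarith
  · simp [h]
  · have := hc.slope_le_of_hasDerivAt (Set.mem_univ b) (Set.mem_univ a) h (hd a)
    rw [slope_def_field] at this
    have hba : 0 < a - b := by linarith
    rw [div_le_iff₀ hba] at this
    nlinarith
end Feps

lemma Fe_contDiff {p ε : ℝ} (hε : ε ≠ 0) : ContDiff ℝ (⊤ : ℕ∞) (Fe p ε) := by
  rw [contDiff_iff_contDiffAt]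
  intro t
  exact ((contDiff_id.pow 2).add contDiff_const).contDiffAt.rpow_const_of_ne
    (Fe_base_pos hε t).ne'

lemma pd1_comp_Fe {p ε : ℝ} {φ : ℝ × ℝ → ℝ} (hε : ε ≠ 0) (hφ : ContDiff ℝ (⊤ : ℕ∞) φ) (x : ℝ × ℝ) :
    pd1 (fun y => Fe p ε (φ y)) x = Fe' p ε (φ x) * pd1 φ x := by
  have h := (Fe_hasDerivAt (p := p) hε (φ x)).comp_hasFDerivAt x
    (hφ.differentiable (by simp) x).hasFDerivAt
  show fderiv ℝ (Fe p ε ∘ φ) x (1, 0) = _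
  rw [h.fderiv]
  simp [pd1]

lemma pd2_comp_Fe {p ε : ℝ} {φ : ℝ × ℝ → ℝ} (hε : ε ≠ 0) (hφ : ContDiff ℝ (⊤ : ℕ∞) φ) (x : ℝ × ℝ) :
    pd2 (fun y => Fe p ε (φ y)) x = Fe' p ε (φ x) * pd2 φ x := by
  have h := (Fe_hasDerivAt (p := p) hε (φ x)).comp_hasFDerivAt x
    (hφ.differentiable (by simp) x).hasFDerivAt
  show fderiv ℝ (Fe p ε ∘ φ) x (0, 1) = _
  rw [h.fderiv]
  simp [pd2]

lemma step_eps (u : ℝ × ℝ → ℝ × ℝ) (ξ φ : ℝ × ℝ → ℝ) (τ p : ℝ)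
    (hτ : 0 < τ) (hp : 1 ≤ p)
    (hu : ContDiff ℝ (⊤ : ℕ∞) u) (hup : Periodic2 u)
    (hξ : ContDiff ℝ (⊤ : ℕ∞) ξ)
    (hφ : ContDiff ℝ (⊤ : ℕ∞) φ) (hφp : Periodic2 φ)
    (hdiv : ∀ x, pd1 (fun y => (u y).1) x + pd2 (fun y => (u y).2) x = 0)
    (heq : ∀ x, φ x = ξ x - τ * ((u x).1 * pd1 φ x + (u x).2 * pd2 φ x))
    {ε : ℝ} (hε : ε ≠ 0) :
    ∫ x in Set.Icc ((0:ℝ), (0:ℝ)) (1, 1), Fe p ε (φ x)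
      ≤ ∫ x in Set.Icc ((0:ℝ), (0:ℝ)) (1, 1), Fe p ε (ξ x) := by
  set S := Set.Icc ((0:ℝ), (0:ℝ)) (1, 1) with hS
  set G := fun y => Fe p ε (φ y) with hG_def
  have hG : ContDiff ℝ (⊤ : ℕ∞) G := (Fe_contDiff hε).comp hφ
  have hGp : Periodic2 G := fun x => by
    constructor <;> simp only [hG_def, (hφp x).1, (hφp x).2]
  have hdivG := div_free_transport hu hup hdiv hG hGp
  have point : ∀ x, Fe p ε (φ x)
      + τ * ((u x).1 * pd1 G x + (u x).2 * pd2 G x) ≤ Fe p ε (ξ x) := by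
    intro x
    have ht := tangent_le (Fe_convex hε hp) (Fe_hasDerivAt hε) (φ x) (ξ x)
    have hx : ξ x - φ x = τ * ((u x).1 * pd1 φ x + (u x).2 * pd2 φ x) := by
      linarith [heq x]
    have h1 : pd1 G x = Fe' p ε (φ x) * pd1 φ x := pd1_comp_Fe hε hφ x
    have h2 : pd2 G x = Fe' p ε (φ x) * pd2 φ x := pd2_comp_Fe hε hφ x
    have hrw : Fe p ε (φ x) + τ * ((u x).1 * pd1 G x + (u x).2 * pd2 G x)
        = Fe p ε (φ x) + Fe' p ε (φ x) * (ξ x - φ x) := by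
      rw [h1, h2, hx]; ring
    rw [hrw]; exact ht
  have hcu1 : Continuous (fun x => (u x).1) := continuous_fst.comp hu.continuous
  have hcu2 : Continuous (fun x => (u x).2) := continuous_snd.comp hu.continuous
  have hcB : Continuous (fun x => τ * ((u x).1 * pd1 G x + (u x).2 * pd2 G x)) :=
    continuous_const.mul ((hcu1.mul (cont_pd1 hG)).add (hcu2.mul (cont_pd2 hG)))
  have hIφ : IntegrableOn (fun x => Fe p ε (φ x)) S :=
    (((Fe_contDiff hε).continuous.comp hφ.continuous)).continuousOn.integrableOn_compact
      isCompact_Icc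
  have hIB : IntegrableOn (fun x => τ * ((u x).1 * pd1 G x + (u x).2 * pd2 G x)) S :=
    hcB.continuousOn.integrableOn_compact isCompact_Icc
  have hIξ : IntegrableOn (fun x => Fe p ε (ξ x)) S :=
    (((Fe_contDiff hε).continuous.comp hξ.continuous)).continuousOn.integrableOn_compact
      isCompact_Icc
  have hmono := MeasureTheory.setIntegral_mono (hIφ.add hIB) hIξ point
  simp only [Pi.add_apply] at hmono
  rw [MeasureTheory.integral_add hIφ hIB, integral_const_mul, hdivG] at hmono
  simpa using hmono

lemma abs_rpow_eq_sq {x : ℝ} (p : ℝ) : |x| ^ p = (x ^ 2 : ℝ) ^ (p / 2 : ℝ) := by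
  have h : |x| = (x ^ 2 : ℝ) ^ ((1:ℝ)/2) := by
    rw [← Real.sqrt_eq_rpow, Real.sqrt_sq_eq_abs]
  rw [h, ← Real.rpow_mul (sq_nonneg x)]
  congr 1; ring

theorem stmt_4 (u : ℝ × ℝ → ℝ × ℝ) (ξ φ : ℝ × ℝ → ℝ) (τ p : ℝ)
    (hτ : 0 < τ) (hp : 1 ≤ p)
    (hu : ContDiff ℝ (⊤ : ℕ∞) u) (hup : Periodic2 u)
    (hξ : ContDiff ℝ (⊤ : ℕ∞) ξ) (hξp : Periodic2 ξ)
    (hφ : ContDiff ℝ (⊤ : ℕ∞) φ) (hφp : Periodic2 φ)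
    (hdiv : ∀ x, pd1 (fun y => (u y).1) x + pd2 (fun y => (u y).2) x = 0)
    (heq : ∀ x, φ x = ξ x - τ * ((u x).1 * pd1 φ x + (u x).2 * pd2 φ x)) :
    (∫ x in Set.Icc ((0 : ℝ), (0 : ℝ)) (1, 1), |φ x| ^ p) ^ (1 / p)
      ≤ (∫ x in Set.Icc ((0 : ℝ), (0 : ℝ)) (1, 1), |ξ x| ^ p) ^ (1 / p) := by
  have hp0 : (0:ℝ) < p := lt_of_lt_of_le one_pos hp
  set S := Set.Icc ((0:ℝ), (0:ℝ)) (1, 1) with hS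
  have hcφ : Continuous fun x : ℝ × ℝ => |φ x| ^ p := by
    apply continuous_iff_continuousAt.2; intro x
    exact (Real.continuousAt_rpow_const _ p (Or.inr hp0.le)).comp
      hφ.continuous.abs.continuousAt
  have hcξ : Continuous fun x : ℝ × ℝ => |ξ x| ^ p := by
    apply continuous_iff_continuousAt.2; intro x
    exact (Real.continuousAt_rpow_const _ p (Or.inr hp0.le)).comp
      hξ.continuous.abs.continuousAt
  have hIφp : IntegrableOn (fun x => |φ x| ^ p) S :=
    hcφ.continuousOn.integrableOn_compact isCompact_Icc
  -- key inequality for each ε ≠ 0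
  have hA_le : ∀ ε : ℝ, ε ≠ 0 →
      (∫ x in S, |φ x| ^ p) ≤ ∫ x in S, Fe p ε (ξ x) := by
    intro ε hε
    have hIFeφ : IntegrableOn (fun x => Fe p ε (φ x)) S :=
      (((Fe_contDiff hε).continuous.comp hφ.continuous)).continuousOn.integrableOn_compact
        isCompact_Icc
    refine le_trans (MeasureTheory.setIntegral_mono hIφp hIFeφ ?_)
      (step_eps u ξ φ τ p hτ hp hu hup hξ hφ hφp hdiv heq hε)
    intro x
    show |φ x| ^ p ≤ Fe p ε (φ x)
    rw [abs_rpow_eq_sq p]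
    exact Real.rpow_le_rpow (sq_nonneg _) (by nlinarith [sq_nonneg ε]) (by positivity)
  -- limit ε → 0
  have hε_pos : ∀ n : ℕ, (0:ℝ) < 1 / (n + 1) := fun n => by positivity
  have htends : Filter.Tendsto (fun n : ℕ => ∫ x in S, Fe p ((1:ℝ)/(n+1)) (ξ x))
      Filter.atTop (nhds (∫ x in S, |ξ x| ^ p)) := by
    apply MeasureTheory.tendsto_integral_of_dominated_convergence
      (bound := fun x => (ξ x ^ 2 + 1) ^ (p/2 : ℝ))
    · intro n
      exact (((Fe_contDiff (hε_pos n).ne').continuous.comp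
        hξ.continuous)).aestronglyMeasurable
    · have : Continuous fun x : ℝ × ℝ => (ξ x ^ 2 + 1) ^ (p/2 : ℝ) := by
        apply continuous_iff_continuousAt.2; intro x
        exact (Real.continuousAt_rpow_const _ _ (Or.inr (by positivity))).comp
          (((hξ.continuous.pow 2).add continuous_const).continuousAt)
      exact this.continuousOn.integrableOn_compact isCompact_Icc
    · intro n
      filter_upwards with x
      have h1 : (0:ℝ) ≤ Fe p ((1:ℝ)/(n+1)) (ξ x) := by
        unfold Fe; positivity
      rw [Real.norm_eq_abs, abs_of_nonneg h1]
      unfold Fe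
      apply Real.rpow_le_rpow (by positivity) ?_ (by positivity)
      have h2 : ((1:ℝ)/(n+1)) ≤ 1 := by
        rw [div_le_one (by positivity)]; linarith [Nat.cast_nonneg (α := ℝ) n]
      nlinarith [hε_pos n]
    · filter_upwards with x
      have h0 : Filter.Tendsto (fun n : ℕ => (1:ℝ)/(n+1)) Filter.atTop (nhds 0) :=
        tendsto_one_div_add_atTop_nhds_zero_nat
      have hin : Filter.Tendsto (fun n : ℕ => ξ x ^ 2 + ((1:ℝ)/(n+1)) ^ 2)
          Filter.atTop (nhds (ξ x ^ 2)) := by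
        have := tendsto_const_nhds (x := ξ x ^ 2) (f := Filter.atTop (α := ℕ))
        simpa using this.add ((h0.pow 2))
      have hcont : ContinuousAt (fun y : ℝ => y ^ (p/2 : ℝ)) (ξ x ^ 2) :=
        Real.continuousAt_rpow_const _ _ (Or.inr (by positivity))
      have := hcont.tendsto.comp hin
      rw [abs_rpow_eq_sq p]
      exact this
  have big : (∫ x in S, |φ x| ^ p) ≤ ∫ x in S, |ξ x| ^ p :=
    ge_of_tendsto' htends (fun n => hA_le _ (hε_pos n).ne')
  exact Real.rpow_le_rpow
    (MeasureTheory.setIntegral_nonneg measurableSet_Icc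
      (fun x _ => Real.rpow_nonneg (abs_nonneg _) p))
    big (by positivity)
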